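/- arXiv:1807.02102 — 2 statements merged into one kernel-verified Lean document; each statement's English description precedes it below -/
import Mathlib

section
/- Let U, V, W, X be series-parallel pomsets with U ∥ V = W ∥ X. Then there exist series-parallel pomsets Y₀, Y₁, Z₀, Z₁ such that U = Y₀ ∥ Y₁, V = Z₀ ∥ Z₁, W = Y₀ ∥ Z₀, and X = Y₁ ∥ Z₁. -/
namespace WBKA

/-- Series-parallel terms over an alphabet `A`. -/
inductive SPTerm (A : Type) : Type
  | one : SPTerm A
  | atom : A → SPTerm A
  | seq : SPTerm A → SPTerm A → SPTerm A
  | par : SPTerm A → SPTerm A → SPTerm A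

/-- The congruence generated by the series-parallel pomset axioms:
associativity of both compositions, commutativity of parallel composition,
and the empty pomset acting as unit for both. -/
inductive SPEquiv {A : Type} : SPTerm A → SPTerm A → Prop
  | refl (u : SPTerm A) : SPEquiv u u
  | symm {u v : SPTerm A} : SPEquiv u v → SPEquiv v u
  | trans {u v w : SPTerm A} : SPEquiv u v → SPEquiv v w → SPEquiv u w
  | seqCongr {u u' v v' : SPTerm A} :
      SPEquiv u u' → SPEquiv v v' → SPEquiv (u.seq v) (u'.seq v')
  | parCongr {u u' v v' : SPTerm A} :
      SPEquiv u u' → SPEquiv v v' → SPEquiv (u.par v) (u'.par v')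
  | seqAssoc (u v w : SPTerm A) : SPEquiv ((u.seq v).seq w) (u.seq (v.seq w))
  | parAssoc (u v w : SPTerm A) : SPEquiv ((u.par v).par w) (u.par (v.par w))
  | parComm (u v : SPTerm A) : SPEquiv (u.par v) (v.par u)
  | seqOneLeft (u : SPTerm A) : SPEquiv (SPTerm.one.seq u) u
  | seqOneRight (u : SPTerm A) : SPEquiv (u.seq SPTerm.one) u
  | parOne (u : SPTerm A) : SPEquiv (u.par SPTerm.one) u

instance spSetoid (A : Type) : Setoid (SPTerm A) :=
  ⟨SPEquiv, SPEquiv.refl, SPEquiv.symm, SPEquiv.trans⟩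

/-- Series-parallel pomsets over `A`, as the free algebra on the sp-pomset axioms. -/
def Pomset (A : Type) : Type := Quotient (spSetoid A)

namespace Pomset

variable {A : Type}

def mk (u : SPTerm A) : Pomset A := Quotient.mk (spSetoid A) u

/-- The empty pomset `1`. -/
def eps : Pomset A := mk SPTerm.one

/-- The primitive pomset consisting of a single event labelled `a`. -/
def atom (a : A) : Pomset A := mk (SPTerm.atom a)

/-- Sequential composition of pomsets. -/
def seq : Pomset A → Pomset A → Pomset A :=
  Quotient.lift₂ (fun u v => mk (u.seq v))
    (fun _ _ _ _ hu hv => Quotient.sound (SPEquiv.seqCongr hu hv))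

/-- Parallel composition of pomsets. -/
def par : Pomset A → Pomset A → Pomset A :=
  Quotient.lift₂ (fun u v => mk (u.par v))
    (fun _ _ _ _ hu hv => Quotient.sound (SPEquiv.parCongr hu hv))

/-- `U` is the empty pomset. -/
def IsEmptyP (U : Pomset A) : Prop := U = eps

/-- `U` is primitive: it consists of a single labelled event. -/
def Primitive (U : Pomset A) : Prop := ∃ a : A, U = atom a

/-- `U` is sequential: a sequential composition of two non-empty pomsets. -/
def Sequential (U : Pomset A) : Prop :=
  ∃ V W : Pomset A, V ≠ eps ∧ W ≠ eps ∧ U = seq V W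

/-- `U` is parallel: a parallel composition of two non-empty pomsets. -/
def Parallel (U : Pomset A) : Prop :=
  ∃ V W : Pomset A, V ≠ eps ∧ W ≠ eps ∧ U = par V W

/-- `U` is a sequential prime. -/
def SeqPrime (U : Pomset A) : Prop :=
  U ≠ eps ∧ ∀ V W : Pomset A, U = seq V W → V = eps ∨ W = eps

/-- `U` is a parallel prime. -/
def ParPrime (U : Pomset A) : Prop :=
  U ≠ eps ∧ ∀ V W : Pomset A, U = par V W → V = eps ∨ W = eps

/-- Sequential product of a list of pomsets. -/
def seqProd (l : List (Pomset A)) : Pomset A := l.foldr seq eps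

/-- Parallel product of a list of pomsets. -/
def parProd (l : List (Pomset A)) : Pomset A := l.foldr par eps

end Pomset

/-- Pointwise sequential composition of pomset languages. -/
def langSeq {A : Type} (L M : Set (Pomset A)) : Set (Pomset A) :=
  Set.image2 Pomset.seq L M

/-- Pointwise parallel composition of pomset languages. -/
def langPar {A : Type} (L M : Set (Pomset A)) : Set (Pomset A) :=
  Set.image2 Pomset.par L M

/-- `n`-fold sequential power of a language. -/
def langPow {A : Type} (L : Set (Pomset A)) : ℕ → Set (Pomset A)
  | 0 => {Pomset.eps}
  | n + 1 => langSeq L (langPow L n)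

/-- Kleene closure of a pomset language. -/
def langStar {A : Type} (L : Set (Pomset A)) : Set (Pomset A) :=
  ⋃ n : ℕ, langPow L n

/-- Series-rational expressions over `A`. -/
inductive SR (A : Type) : Type
  | zero : SR A
  | one : SR A
  | atom : A → SR A
  | plus : SR A → SR A → SR A
  | seq : SR A → SR A → SR A
  | par : SR A → SR A → SR A
  | star : SR A → SR A

/-- The sp-language semantics of series-rational expressions. -/
def sem {A : Type} : SR A → Set (Pomset A)
  | .zero => ∅
  | .one => {Pomset.eps}
  | .atom a => {Pomset.atom a}
  | .plus e f => sem e ∪ sem f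
  | .seq e f => langSeq (sem e) (sem f)
  | .par e f => langPar (sem e) (sem f)
  | .star e => langStar (sem e)

/-- The syntactic predicate `F` characterising acceptance of the empty pomset. -/
inductive EF {A : Type} : SR A → Prop
  | one : EF SR.one
  | plusLeft {e : SR A} (f : SR A) : EF e → EF (SR.plus e f)
  | plusRight (e : SR A) {f : SR A} : EF f → EF (SR.plus e f)
  | seq {e f : SR A} : EF e → EF f → EF (SR.seq e f)
  | par {e f : SR A} : EF e → EF f → EF (SR.par e f)
  | star (e : SR A) : EF (SR.star e)

/-- Pomset automata. -/
structure PA (A : Type) (Q : Type) where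
  acc : Set Q
  δ : Q → A → Set Q
  γ : Q → Multiset Q → Set Q

/-- The run relation of a pomset automaton. -/
inductive Run {A Q : Type} (M : PA A Q) : Q → Pomset A → Q → Prop
  | triv (q : Q) : Run M q Pomset.eps q
  | seqUnit {q : Q} {a : A} {q' : Q} :
      q' ∈ M.δ q a → Run M q (Pomset.atom a) q'
  | comp {q : Q} {U : Pomset A} {q'' : Q} {V : Pomset A} {q' : Q} :
      Run M q U q'' → Run M q'' V q' → Run M q (U.seq V) q'
  | parUnit {q q' : Q} (l : List (Q × Pomset A × Q)) :
      q' ∈ M.γ q (↑(l.map Prod.fst) : Multiset Q) →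
      (∀ x ∈ l, x.2.2 ∈ M.acc) →
      (∀ x ∈ l, Run M x.1 x.2.1 x.2.2) →
      Run M q (Pomset.parProd (l.map fun x => x.2.1)) q'

/-- Language of a state of a pomset automaton. -/
def PA.lang {A Q : Type} (M : PA A Q) (q : Q) : Set (Pomset A) :=
  {U | ∃ q' ∈ M.acc, Run M q U q'}

/-- The triple `q →^U q'` matches the trivial-run rule. -/
def TrivialRun {A Q : Type} (_M : PA A Q) (q : Q) (U : Pomset A) (q' : Q) : Prop :=
  U = Pomset.eps ∧ q = q'

/-- `q →^U q'` is a sequential unit run. -/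
def SeqUnitRun {A Q : Type} (M : PA A Q) (q : Q) (U : Pomset A) (q' : Q) : Prop :=
  ∃ a : A, U = Pomset.atom a ∧ q' ∈ M.δ q a

/-- `q →^U q'` is a parallel unit run. -/
def ParUnitRun {A Q : Type} (M : PA A Q) (q : Q) (U : Pomset A) (q' : Q) : Prop :=
  ∃ l : List (Q × Pomset A × Q),
    q' ∈ M.γ q (↑(l.map Prod.fst) : Multiset Q) ∧
    (∀ x ∈ l, x.2.2 ∈ M.acc ∧ Run M x.1 x.2.1 x.2.2) ∧
    U = Pomset.parProd (l.map fun x => x.2.1)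

/-- `q →^U q'` is a unit run: a sequential or a parallel unit run. -/
def UnitRun {A Q : Type} (M : PA A Q) (q : Q) (U : Pomset A) (q' : Q) : Prop :=
  SeqUnitRun M q U q' ∨ ParUnitRun M q U q'

/-- `q →^U q'` is a composite run: a sequential composition of two non-trivial runs. -/
def CompositeRun {A Q : Type} (M : PA A Q) (q : Q) (U : Pomset A) (q' : Q) : Prop :=
  ∃ (V W : Pomset A) (q'' : Q),
    U = V.seq W ∧ Run M q V q'' ∧ Run M q'' W q' ∧
    ¬ TrivialRun M q V q'' ∧ ¬ TrivialRun M q'' W q'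

/-- The support preorder: `Supports M q' q` means `q' ⪯ q`. -/
inductive Supports {A Q : Type} (M : PA A Q) : Q → Q → Prop
  | refl (q : Q) : Supports M q q
  | trans {q r p : Q} : Supports M q r → Supports M r p → Supports M q p
  | deltaStep {q : Q} {a : A} {q' : Q} : q' ∈ M.δ q a → Supports M q' q
  | gammaStep {q : Q} {φ : Multiset Q} {q' : Q} : q' ∈ M.γ q φ → Supports M q' q
  | forkStep {q : Q} {φ : Multiset Q} {r : Q} :
      r ∈ φ → (M.γ q φ).Nonempty → Supports M r q

/-- A pomset automaton is fork-acyclic when every fork target `r` of `q`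
satisfies `r ≺ q`, i.e. `q ⋠ r`. -/
def ForkAcyclic {A Q : Type} (M : PA A Q) : Prop :=
  ∀ (q : Q) (φ : Multiset Q) (r : Q),
    r ∈ φ → (M.γ q φ).Nonempty → ¬ Supports M q r

/-- A set of states is support-closed. -/
def SupportClosed {A Q : Type} (M : PA A Q) (S : Set Q) : Prop :=
  ∀ q ∈ S, ∀ q' : Q, Supports M q' q → q' ∈ S

/-- Restriction of a pomset automaton to a set of states. -/
def PA.restrict {A Q : Type} (M : PA A Q) (S : Set Q) : PA A {q : Q // q ∈ S} where
  acc := {q | q.val ∈ M.acc}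
  δ := fun q a => {r | r.val ∈ M.δ q.val a}
  γ := fun q φ => {r | r.val ∈ M.γ q.val (φ.map Subtype.val)}

/-- `n`-forking automata. -/
def NForking {A Q : Type} (M : PA A Q) (n : ℕ) : Prop :=
  ∀ (q : Q) (φ : Multiset Q), (M.γ q φ).Nonempty → n ≤ Multiset.card φ

/-- Parsimonious automata: no fork target accepts the empty pomset. -/
def Parsimonious {A Q : Type} (M : PA A Q) : Prop :=
  ∀ (p : Q) (φ : Multiset Q) (q : Q),
    q ∈ φ → (M.γ p φ).Nonempty → Pomset.eps ∉ M.lang q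

/-- Flat-branching automata: forks from fork targets never reach accepting states. -/
def FlatBranching {A Q : Type} (M : PA A Q) : Prop :=
  ∀ (p : Q) (φ : Multiset Q) (q : Q),
    q ∈ φ → (M.γ p φ).Nonempty → ∀ ψ : Multiset Q, M.γ q ψ ∩ M.acc = ∅

/-- Well-structured pomset automata. -/
def WellStructured {A Q : Type} (M : PA A Q) : Prop :=
  (∀ (q : Q) (φ : Multiset Q), (M.γ q φ).Nonempty → 2 ≤ Multiset.card φ) ∧
  ∀ (p : Q) (φ : Multiset Q) (q : Q), q ∈ φ → (M.γ p φ).Nonempty →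
    q ∉ M.acc ∧ ∀ ψ : Multiset Q, M.γ q ψ ∩ M.acc = ∅

/-- The relation `⇝` characterising runs labelled by the empty pomset. -/
inductive Leadsto {A Q : Type} (M : PA A Q) : Q → Q → Prop
  | refl (p : Q) : Leadsto M p p
  | trans {p r q : Q} : Leadsto M p r → Leadsto M r q → Leadsto M p q
  | fork {p q : Q} (l : List (Q × Q)) :
      q ∈ M.γ p (↑(l.map Prod.fst) : Multiset Q) →
      (∀ x ∈ l, x.2 ∈ M.acc) →
      (∀ x ∈ l, Leadsto M x.1 x.2) →
      Leadsto M p q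

/-- Concatenate each expression of a set with `f` on the right. -/
def seqAfter {A : Type} (T : Set (SR A)) (f : SR A) : Set (SR A) :=
  (fun g => SR.seq g f) '' T

/-- Antimirov-style sequential derivatives of sr-expressions. -/
def deltaS {A : Type} : SR A → A → Set (SR A)
  | .zero, _ => ∅
  | .one, _ => ∅
  | .atom b, a => {g | g = SR.one ∧ a = b}
  | .plus e f, a => deltaS e a ∪ deltaS f a
  | .seq e f, a => seqAfter (deltaS e a) f ∪ {g | g ∈ deltaS f a ∧ EF e}
  | .par _ _, _ => ∅
  | .star e, a => seqAfter (deltaS e a) (SR.star e)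

/-- Antimirov-style parallel derivatives of sr-expressions. -/
def gammaS {A : Type} : SR A → Multiset (SR A) → Set (SR A)
  | .zero, _ => ∅
  | .one, _ => ∅
  | .atom _, _ => ∅
  | .plus e f, φ => gammaS e φ ∪ gammaS f φ
  | .seq e f, φ => seqAfter (gammaS e φ) f ∪ {g | g ∈ gammaS f φ ∧ EF e}
  | .par e f, φ => {g | g = SR.one ∧ φ = {e, f}}
  | .star e, φ => seqAfter (gammaS e φ) (SR.star e)

/-- The syntactic pomset automaton on sr-expressions. -/
def synPA (A : Type) : PA A (SR A) where
  acc := {e | EF e}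
  δ := deltaS
  γ := gammaS

/-- The parallel-nesting depth of an sr-expression. -/
def pdepth {A : Type} : SR A → ℕ
  | .zero => 0
  | .one => 0
  | .atom _ => 0
  | .plus e f => max (pdepth e) (pdepth f)
  | .seq e f => max (pdepth e) (pdepth f)
  | .par e f => max (pdepth e) (pdepth f) + 1
  | .star e => pdepth e

/-- A substitution `ζ : Σ → 2^{SP(Δ)}` is atomic. -/
def Atomic {A B : Type} (ζ : A → Set (Pomset B)) : Prop :=
  (∀ a : A, ∀ U ∈ ζ a, Pomset.SeqPrime U) ∧
  (∀ a b : A, (ζ a ∩ ζ b).Nonempty ↔ a = b)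

/-- Extension of a substitution to words. -/
def substWord {A B : Type} (ζ : A → Set (Pomset B)) : List A → Set (Pomset B)
  | [] => {Pomset.eps}
  | a :: w => langSeq (ζ a) (substWord ζ w)

/-- Extension of a substitution to word languages. -/
def substLang {A B : Type} (ζ : A → Set (Pomset B)) (L : Set (List A)) :
    Set (Pomset B) :=
  ⋃ w ∈ L, substWord ζ w

/-- `L_A(α)` for a set `α` of states: the atom language of `α`. -/
def atomLang {Q U : Type} (LA : Q → Set U) (α : Set Q) : Set U :=
  (⋂ q ∈ α, LA q) \ (⋃ (q : Q) (_ : q ∉ α), LA q)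

/-!
A series-parallel pomset is the parallel product of its parallel components, and the multiset
of components is additive under `∥`. Parallel composition is therefore a retract of addition
of multisets, and Levi's lemma is inherited from the refinement property of multisets: split
`a + b = c + d` as `a = (a ∩ c) + (a - c)`, `c = (a ∩ c) + (c - a)`.
-/

end WBKA

theorem Multiset.exists_refinement_of_add_eq_add {α : Type*} [DecidableEq α]
    {a b c d : Multiset α} (h : a + b = c + d) :
    ∃ y₀ y₁ z₀ z₁ : Multiset α,
      a = y₀ + y₁ ∧ b = z₀ + z₁ ∧ c = y₀ + z₀ ∧ d = y₁ + z₁ := by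
  refine ⟨a ∩ c, a - c, c - a, b - (c - a), ?_, ?_, ?_, ?_⟩ <;>
  · ext x
    have hx := congrArg (Multiset.count x) h
    simp only [Multiset.count_add, Multiset.count_inter, Multiset.count_sub] at *
    omega

theorem CommMonoid.exists_refinement_of_mul_eq_mul {M : Type*} [CommMonoid M]
    (factors : M → Multiset M) (factors_mul : ∀ x y, factors (x * y) = factors x + factors y)
    (prod_factors : ∀ x, (factors x).prod = x) {u v w x : M} (h : u * v = w * x) :
    ∃ y₀ y₁ z₀ z₁ : M, u = y₀ * y₁ ∧ v = z₀ * z₁ ∧ w = y₀ * z₀ ∧ x = y₁ * z₁ := by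
  classical
  have hfactors : factors u + factors v = factors w + factors x := by
    rw [← factors_mul, ← factors_mul, h]
  obtain ⟨y₀, y₁, z₀, z₁, hu, hv, hw, hx⟩ :=
    Multiset.exists_refinement_of_add_eq_add hfactors
  have eq_prod_mul_prod {m : M} {s t : Multiset M} (hm : factors m = s + t) :
      m = s.prod * t.prod := by
    rw [← Multiset.prod_add, ← hm, prod_factors]
  exact ⟨_, _, _, _, eq_prod_mul_prod hu, eq_prod_mul_prod hv, eq_prod_mul_prod hw,
    eq_prod_mul_prod hx⟩

namespace WBKA

namespace Pomset

variable {A : Type}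

theorem eps_seq (U : Pomset A) : eps.seq U = U :=
  Quotient.inductionOn U fun u => Quotient.sound (SPEquiv.seqOneLeft u)

theorem seq_eps (U : Pomset A) : U.seq eps = U :=
  Quotient.inductionOn U fun u => Quotient.sound (SPEquiv.seqOneRight u)

theorem par_eps (U : Pomset A) : U.par eps = U :=
  Quotient.inductionOn U fun u => Quotient.sound (SPEquiv.parOne u)

theorem par_comm (U V : Pomset A) : U.par V = V.par U :=
  Quotient.inductionOn₂ U V fun u v => Quotient.sound (SPEquiv.parComm u v)

theorem par_assoc (U V W : Pomset A) : (U.par V).par W = U.par (V.par W) :=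
  Quotient.inductionOn₃ U V W fun u v w => Quotient.sound (SPEquiv.parAssoc u v w)

theorem eps_par (U : Pomset A) : eps.par U = U := by
  rw [par_comm, par_eps]

instance : CommMonoid (Pomset A) where
  mul := par
  one := eps
  mul_assoc := par_assoc
  one_mul := eps_par
  mul_one := par_eps
  mul_comm := par_comm

theorem mk_seq (u v : SPTerm A) : mk (u.seq v) = (mk u).seq (mk v) := rfl

end Pomset

namespace SPTerm

open Pomset Classical

variable {A : Type}

-- `parComponents u = 0` exactly when `u` denotes the empty pomset; this is the emptiness test
-- in the sequential case.
noncomputable def parComponents : SPTerm A → Multiset (Pomset A)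
  | one => 0
  | atom a => {mk (atom a)}
  | seq u v =>
      if parComponents u = 0 then parComponents v
      else if parComponents v = 0 then parComponents u
      else {mk (u.seq v)}
  | par u v => parComponents u + parComponents v

theorem prod_parComponents (u : SPTerm A) : (parComponents u).prod = mk u := by
  induction u with
  | one => rfl
  | atom a => exact Multiset.prod_singleton _
  | seq u v ihu ihv =>
      change _ = (mk u).seq (mk v)
      by_cases hu : parComponents u = 0
      · rw [parComponents, if_pos hu, ihv, ← ihu, hu]
        exact (eps_seq _).symm
      by_cases hv : parComponents v = 0
      · rw [parComponents, if_neg hu, if_pos hv, ihu, ← ihv, hv]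
        exact (seq_eps _).symm
      rw [parComponents, if_neg hu, if_neg hv, Multiset.prod_singleton]
      rfl
  | par u v ihu ihv =>
      simp only [parComponents, Multiset.prod_add, ihu, ihv]; rfl

theorem mk_eq_eps_of_parComponents_eq_zero {u : SPTerm A} (hu : parComponents u = 0) :
    mk u = eps := by
  rw [← prod_parComponents, hu]; rfl

theorem parComponents_eq_of_equiv {u v : SPTerm A} (h : SPEquiv u v) :
    parComponents u = parComponents v := by
  induction h with
  | refl u => rfl
  | symm _ ih => exact ih.symm
  | trans _ _ ih₁ ih₂ => exact ih₁.trans ih₂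
  | @seqCongr u u' v v' hu hv ihu ihv =>
      have hmk : mk (u.seq v) = mk (u'.seq v') := Quotient.sound (SPEquiv.seqCongr hu hv)
      simp only [parComponents, ihu, ihv, hmk]
  | parCongr _ _ ihu ihv => simp only [parComponents, ihu, ihv]
  | seqAssoc u v w =>
      have hassoc : mk ((u.seq v).seq w) = mk (u.seq (v.seq w)) :=
        Quotient.sound (SPEquiv.seqAssoc u v w)
      by_cases hu : parComponents u = 0 <;> by_cases hv : parComponents v = 0 <;>
        by_cases hw : parComponents w = 0 <;>
        simp only [parComponents, hu, hv, hw, ↓reduceIte, Multiset.singleton_ne_zero,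
          Multiset.singleton_inj]
      all_goals first
        | exact hassoc
        | simp only [mk_seq, mk_eq_eps_of_parComponents_eq_zero, hu, hw, eps_seq, seq_eps]
  | parAssoc u v w => simp only [parComponents, add_assoc]
  | parComm u v => simp only [parComponents, add_comm]
  | seqOneLeft u => simp only [parComponents, ↓reduceIte]
  | seqOneRight u => by_cases hu : parComponents u = 0 <;> simp only [parComponents, hu, ↓reduceIte]
  | parOne u => simp only [parComponents, Multiset.add_zero]

end SPTerm

namespace Pomset

variable {A : Type}

noncomputable def parComponents : Pomset A → Multiset (Pomset A) :=
  Quotient.lift SPTerm.parComponents fun _ _ => SPTerm.parComponents_eq_of_equiv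

theorem parComponents_par (U V : Pomset A) :
    parComponents (U.par V) = parComponents U + parComponents V :=
  Quotient.inductionOn₂ U V fun _ _ => rfl

theorem prod_parComponents (U : Pomset A) : (parComponents U).prod = U :=
  Quotient.inductionOn U SPTerm.prod_parComponents

end Pomset

/-- Levi's lemma for parallel composition of sp-pomsets. -/
theorem pomset_levi_parallel {A : Type} (U V W X : Pomset A)
    (h : U.par V = W.par X) :
    ∃ Y₀ Y₁ Z₀ Z₁ : Pomset A,
      U = Y₀.par Y₁ ∧ V = Z₀.par Z₁ ∧ W = Y₀.par Z₀ ∧ X = Y₁.par Z₁ :=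
  CommMonoid.exists_refinement_of_mul_eq_mul Pomset.parComponents Pomset.parComponents_par
    Pomset.prod_parComponents h

end WBKA
end

section
/- Every series-parallel pomset has a unique parallel factorisation: if U = V₁ ∥ ⋯ ∥ Vₙ and U = W₁ ∥ ⋯ ∥ Wₘ where all Vᵢ and Wⱼ are parallel primes, then the multisets ⦃V₁, …, Vₙ⦄ and ⦃W₁, …, Wₘ⦄ are equal. -/
namespace WBKA

section ParallelFactorisation

variable {A : Type}

/-- Number of atoms in a term. -/
def tsize {A : Type} : SPTerm A → ℕ
  | .one => 0
  | .atom _ => 1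
  | .seq u v => tsize u + tsize v
  | .par u v => tsize u + tsize v

lemma tsize_equiv {u v : SPTerm A} (h : SPEquiv u v) : tsize u = tsize v := by
  induction h <;> simp [tsize, *] <;> omega

lemma tsize_zero {u : SPTerm A} (h : tsize u = 0) : SPEquiv u .one := by
  induction u with
  | one => exact SPEquiv.refl _
  | atom a => simp [tsize] at h
  | seq u v ihu ihv =>
    simp [tsize] at h
    exact SPEquiv.trans (SPEquiv.seqCongr (ihu h.1) (ihv h.2)) (SPEquiv.seqOneLeft _)
  | par u v ihu ihv =>
    simp [tsize] at h
    exact SPEquiv.trans (SPEquiv.parCongr (ihu h.1) (ihv h.2)) (SPEquiv.parOne _)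

def psize : Pomset A → ℕ :=
  Quotient.lift tsize (fun _ _ h => tsize_equiv h)

lemma mk_eq_eps_iff (u : SPTerm A) : Pomset.mk u = Pomset.eps ↔ tsize u = 0 := by
  constructor
  · intro h
    have := congrArg psize h
    simpa [psize, Pomset.mk, Pomset.eps, tsize] using this
  · intro h
    exact Quotient.sound (tsize_zero h)

lemma mk_seq (u v : SPTerm A) :
    Pomset.mk (u.seq v) = Pomset.seq (Pomset.mk u) (Pomset.mk v) := rfl

lemma mk_par (u v : SPTerm A) :
    Pomset.mk (u.par v) = Pomset.par (Pomset.mk u) (Pomset.mk v) := rfl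

lemma seq_eps_left (U : Pomset A) : Pomset.seq Pomset.eps U = U := by
  induction U using Quotient.ind with
  | _ u => exact Quotient.sound (SPEquiv.seqOneLeft u)

lemma seq_eps_right (U : Pomset A) : Pomset.seq U Pomset.eps = U := by
  induction U using Quotient.ind with
  | _ u => exact Quotient.sound (SPEquiv.seqOneRight u)

lemma par_eps_left (U : Pomset A) : Pomset.par Pomset.eps U = U := by
  induction U using Quotient.ind with
  | _ u => exact Quotient.sound (SPEquiv.trans (SPEquiv.parComm _ _) (SPEquiv.parOne u))

lemma par_eps_right (U : Pomset A) : Pomset.par U Pomset.eps = U := by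
  induction U using Quotient.ind with
  | _ u => exact Quotient.sound (SPEquiv.parOne u)

lemma pseq_assoc (U V W : Pomset A) :
    Pomset.seq (Pomset.seq U V) W = Pomset.seq U (Pomset.seq V W) := by
  induction U using Quotient.ind with
  | _ u =>
    induction V using Quotient.ind with
    | _ v =>
      induction W using Quotient.ind with
      | _ w => exact Quotient.sound (SPEquiv.seqAssoc u v w)

lemma seq_eps_iff (u v : SPTerm A) :
    Pomset.mk (u.seq v) = Pomset.eps ↔
      Pomset.mk u = Pomset.eps ∧ Pomset.mk v = Pomset.eps := by
  simp [mk_eq_eps_iff, tsize]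

lemma pseq_eps_iff (U V : Pomset A) :
    Pomset.seq U V = Pomset.eps ↔ U = Pomset.eps ∧ V = Pomset.eps := by
  induction U using Quotient.ind with
  | _ u =>
    induction V using Quotient.ind with
    | _ v => exact seq_eps_iff u v

open Classical in
/-- The multiset of parallel prime factors of a term. -/
noncomputable def pfac {A : Type} : SPTerm A → Multiset (Pomset A)
  | .one => 0
  | .atom a => {Pomset.atom a}
  | .seq u v =>
      if Pomset.mk u = Pomset.eps then pfac v
      else if Pomset.mk v = Pomset.eps then pfac u
      else {Pomset.mk (u.seq v)}
  | .par u v => pfac u + pfac v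

lemma pfac_eps {u : SPTerm A} (h : Pomset.mk u = Pomset.eps) : pfac u = 0 := by
  induction u with
  | one => rfl
  | atom a => simp [mk_eq_eps_iff, tsize] at h
  | seq u v ihu ihv =>
    rw [seq_eps_iff] at h
    simp [pfac, h.1, ihv h.2]
  | par u v ihu ihv =>
    have h' : Pomset.mk u = Pomset.eps ∧ Pomset.mk v = Pomset.eps := by
      simpa [mk_eq_eps_iff, tsize] using h
    simp [pfac, ihu h'.1, ihv h'.2]

lemma pfac_equiv {u v : SPTerm A} (h : SPEquiv u v) : pfac u = pfac v := by
  induction h with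
  | refl u => rfl
  | symm _ ih => exact ih.symm
  | trans _ _ ih1 ih2 => exact ih1.trans ih2
  | seqCongr h1 h2 ih1 ih2 =>
    have e1 := Quotient.sound (s := spSetoid A) h1
    have e2 := Quotient.sound (s := spSetoid A) h2
    show pfac _ = pfac _
    simp only [pfac, mk_seq]
    rw [show Pomset.mk _ = Pomset.mk _ from e1, show Pomset.mk _ = Pomset.mk _ from e2,
      ih1, ih2]
  | parCongr h1 h2 ih1 ih2 => simp only [pfac, ih1, ih2]
  | seqAssoc u v w =>
    simp only [pfac, mk_seq]
    by_cases hu : Pomset.mk u = Pomset.eps <;>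
    by_cases hv : Pomset.mk v = Pomset.eps <;>
    by_cases hw : Pomset.mk w = Pomset.eps <;>
    simp [hu, hv, hw, pseq_eps_iff, seq_eps_left, seq_eps_right, pseq_assoc]
  | parAssoc u v w => simp [pfac, add_assoc]
  | parComm u v => simp [pfac, add_comm]
  | seqOneLeft u =>
    have : Pomset.mk (SPTerm.one : SPTerm A) = Pomset.eps := rfl
    simp [pfac, this]
  | seqOneRight u =>
    have h1 : Pomset.mk (SPTerm.one : SPTerm A) = Pomset.eps := rfl
    by_cases hu : Pomset.mk u = Pomset.eps
    · simp [pfac, hu, pfac_eps hu]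
    · simp [pfac, hu, h1, mk_seq, seq_eps_right]
  | parOne u => simp [pfac]

/-- Parallel factorisation of a pomset. -/
noncomputable def pfacQ : Pomset A → Multiset (Pomset A) :=
  Quotient.lift pfac (fun _ _ h => pfac_equiv h)

lemma pfacQ_eps : pfacQ (Pomset.eps : Pomset A) = 0 := rfl

lemma pfacQ_par (U V : Pomset A) :
    pfacQ (Pomset.par U V) = pfacQ U + pfacQ V := by
  induction U using Quotient.ind with
  | _ u =>
    induction V using Quotient.ind with
    | _ v => rfl

lemma pfac_prime (u : SPTerm A) (h : Pomset.ParPrime (Pomset.mk u)) :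
    pfac u = {Pomset.mk u} := by
  induction u with
    | one => exact absurd rfl h.1
    | atom a => rfl
    | seq u v ihu ihv =>
      by_cases hu : Pomset.mk u = Pomset.eps
      · have e : Pomset.mk (u.seq v) = Pomset.mk v := by
          rw [mk_seq, hu, seq_eps_left]
        have h' : Pomset.ParPrime (Pomset.mk v) := e ▸ h
        simp only [pfac, hu, if_pos]
        rw [ihv h']
        exact congrArg _ e.symm
      · by_cases hv : Pomset.mk v = Pomset.eps
        · have e : Pomset.mk (u.seq v) = Pomset.mk u := by
            rw [mk_seq, hv, seq_eps_right]
          have h' : Pomset.ParPrime (Pomset.mk u) := e ▸ h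
          simp only [pfac, hu, hv, if_neg, if_pos, not_false_iff]
          rw [ihu h']
          exact congrArg _ e.symm
        · simp [pfac, hu, hv]
    | par u v ihu ihv =>
      have hd : Pomset.mk u = Pomset.eps ∨ Pomset.mk v = Pomset.eps :=
        h.2 (Pomset.mk u) (Pomset.mk v) rfl
      rcases hd with hu | hv
      · have e : Pomset.mk (u.par v) = Pomset.mk v := by
          rw [mk_par, hu, par_eps_left]
        have h' : Pomset.ParPrime (Pomset.mk v) := e ▸ h
        simp only [pfac, pfac_eps hu, zero_add]
        rw [ihv h']
        exact congrArg _ e.symm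
      · have e : Pomset.mk (u.par v) = Pomset.mk u := by
          rw [mk_par, hv, par_eps_right]
        have h' : Pomset.ParPrime (Pomset.mk u) := e ▸ h
        simp only [pfac, pfac_eps hv, add_zero]
        rw [ihu h']
        exact congrArg _ e.symm

lemma pfacQ_prime {U : Pomset A} (h : Pomset.ParPrime U) : pfacQ U = {U} := by
  induction U using Quotient.ind with
  | _ u => exact pfac_prime u h

lemma pfacQ_parProd (L : List (Pomset A)) (hL : ∀ V ∈ L, Pomset.ParPrime V) :
    pfacQ (Pomset.parProd L) = (↑L : Multiset (Pomset A)) := by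
  induction L with
  | nil => rfl
  | cons V L ih =>
    have : Pomset.parProd (V :: L) = Pomset.par V (Pomset.parProd L) := rfl
    rw [this, pfacQ_par, pfacQ_prime (hL V (by simp)),
      ih (fun W hW => hL W (by simp [hW]))]
    simp

end ParallelFactorisation

/-- Parallel factorisations of sp-pomsets are unique: two families of parallel
primes with the same parallel product are equal as multisets. -/
theorem parallel_factorisation_unique {A : Type} (L M : List (Pomset A))
    (hL : ∀ V ∈ L, Pomset.ParPrime V) (hM : ∀ W ∈ M, Pomset.ParPrime W)
    (h : Pomset.parProd L = Pomset.parProd M) :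
    (↑L : Multiset (Pomset A)) = (↑M : Multiset (Pomset A)) := by
  rw [← pfacQ_parProd L hL, ← pfacQ_parProd M hM, h]

end WBKA
end
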